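/- arXiv:2207.12778 — 4 statements merged into one kernel-verified Lean document; each statement's English description precedes it below -/
import Mathlib

section
/- Let X be a semigroup and q : X → X/⇕ the quotient homomorphism onto its semilattice reflection. Then the restriction of q to the set VE(X) of viable idempotents is injective, and moreover is an order embedding of the poset (VE(X), ≤) into the poset X/⇕ (i.e. for e, f ∈ VE(X), e ≤ f if and only if q(e) ≤ q(f)). -/
universe u

open Set TopologicalSpace

/-- A topological space is zero-dimensional: it has a base of clopen sets. -/
def HasClopenBasis (Y : Type*) [TopologicalSpace Y] : Prop :=
  ∃ B : Set (Set Y), (∀ s ∈ B, IsClopen s) ∧ IsTopologicalBasis B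

section TopClasses

variable (X : Type u) [Semigroup X]

/-- `X` is absolutely `T₁S`-closed: the image of every homomorphism to a `T₁`
topological semigroup is closed. -/
def AbsolutelyT1SClosed : Prop :=
  ∀ (Y : Type u) [Semigroup Y] [TopologicalSpace Y] [ContinuousMul Y] [T1Space Y]
    (h : X →ₙ* Y), IsClosed (Set.range h)

/-- `X` is absolutely `T₂S`-closed. -/
def AbsolutelyT2SClosed : Prop :=
  ∀ (Y : Type u) [Semigroup Y] [TopologicalSpace Y] [ContinuousMul Y] [T2Space Y]
    (h : X →ₙ* Y), IsClosed (Set.range h)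

/-- `X` is absolutely `TzS`-closed. -/
def AbsolutelyTzSClosed : Prop :=
  ∀ (Y : Type u) [Semigroup Y] [TopologicalSpace Y] [ContinuousMul Y] [T1Space Y],
    HasClopenBasis Y → ∀ (h : X →ₙ* Y), IsClosed (Set.range h)

/-- `X` is `T₁S`-closed: the image of every injective homomorphism to a `T₁`
topological semigroup with discrete image is closed. -/
def T1SClosed : Prop :=
  ∀ (Y : Type u) [Semigroup Y] [TopologicalSpace Y] [ContinuousMul Y] [T1Space Y]
    (h : X →ₙ* Y), Function.Injective h → DiscreteTopology (Set.range h) →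
      IsClosed (Set.range h)

/-- `X` is `T₂S`-closed. -/
def T2SClosed : Prop :=
  ∀ (Y : Type u) [Semigroup Y] [TopologicalSpace Y] [ContinuousMul Y] [T2Space Y]
    (h : X →ₙ* Y), Function.Injective h → DiscreteTopology (Set.range h) →
      IsClosed (Set.range h)

/-- `X` is `TzS`-closed. -/
def TzSClosed : Prop :=
  ∀ (Y : Type u) [Semigroup Y] [TopologicalSpace Y] [ContinuousMul Y] [T1Space Y],
    HasClopenBasis Y → ∀ (h : X →ₙ* Y), Function.Injective h →
      DiscreteTopology (Set.range h) → IsClosed (Set.range h)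

/-- `X` is injectively `T₂S`-closed. -/
def InjectivelyT2SClosed : Prop :=
  ∀ (Y : Type u) [Semigroup Y] [TopologicalSpace Y] [ContinuousMul Y] [T2Space Y]
    (h : X →ₙ* Y), Function.Injective h → IsClosed (Set.range h)

/-- `X` is projectively `T₁S`-closed: all congruence quotients are `T₁S`-closed. -/
def ProjectivelyT1SClosed : Prop := ∀ c : Con X, T1SClosed c.Quotient

/-- `X` is projectively `TzS`-closed. -/
def ProjectivelyTzSClosed : Prop := ∀ c : Con X, TzSClosed c.Quotient

/-- `X` is projectively `T₁S`-discrete: every homomorphism into a `T₁`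
topological semigroup has discrete image. -/
def ProjectivelyT1SDiscrete : Prop :=
  ∀ (Y : Type u) [Semigroup Y] [TopologicalSpace Y] [ContinuousMul Y] [T1Space Y]
    (h : X →ₙ* Y), DiscreteTopology (Set.range h)

/-- `X` is projectively `TzS`-discrete. -/
def ProjectivelyTzSDiscrete : Prop :=
  ∀ (Y : Type u) [Semigroup Y] [TopologicalSpace Y] [ContinuousMul Y] [T1Space Y],
    HasClopenBasis Y → ∀ (h : X →ₙ* Y), DiscreteTopology (Set.range h)

end TopClasses

/-- `spow x n` is the power `x^(n+1)` in a semigroup; thus as `n` ranges over `ℕ`,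
`spow x n` ranges over all powers `x^m`, `m ≥ 1`. -/
def spow {X : Type*} [Semigroup X] (x : X) : ℕ → X
  | 0 => x
  | n + 1 => spow x n * x

section AlgDefs

variable (X : Type*) [Semigroup X]

/-- the set `E(X)` of idempotents. -/
def idemSet : Set X := {x | x * x = x}

/-- `H_e`, the maximal subgroup containing the idempotent `e`. -/
def maxSubgroup (e : X) : Set X :=
  {x | x * e = x ∧ e * x = x ∧ ∃ y, y * e = y ∧ e * y = y ∧ x * y = e ∧ y * x = e}

/-- The Clifford part `H(X) = ⋃_{e ∈ E(X)} H_e`. -/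
def cliffordPart : Set X := ⋃ e ∈ idemSet X, maxSubgroup X e

/-- `H_e/e := {x : xe = ex ∈ H_e}`. -/
def HeCoideal (e : X) : Set X := {x | x * e = e * x ∧ x * e ∈ maxSubgroup X e}

/-- `I` is an ideal of the semigroup `X`. -/
def IsIdealSet (I : Set X) : Prop := ∀ x ∈ I, ∀ y : X, x * y ∈ I ∧ y * x ∈ I

/-- The set `VE(X)` of viable idempotents: `e` is idempotent and `X ∖ (H_e/e)` is an ideal. -/
def viableIdems : Set X := {e | e ∈ idemSet X ∧ IsIdealSet X (Set.univ \ HeCoideal X e)}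

/-- The center `Z(X)`. -/
def centerSet : Set X := {z | ∀ x, z * x = x * z}

/-- `√A = {x : xⁿ ∈ A for some n ≥ 1}`. -/
def sqrtSet (A : Set X) : Set X := {x | ∃ n : ℕ, spow x n ∈ A}

/-- A subset `B ⊆ X` is bounded: there is `n ≥ 1` with `xⁿ` idempotent for all `x ∈ B`. -/
def BoundedSet (B : Set X) : Prop := ∃ n : ℕ, ∀ x ∈ B, spow x n ∈ idemSet X

/-- The semigroup `X` is bounded. -/
def BoundedSemigroup : Prop := ∃ n : ℕ, ∀ x : X, spow x n ∈ idemSet X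

/-- `X` is chain-finite. -/
def ChainFinite : Prop :=
  ∀ I : Set X, I.Infinite → ∃ x ∈ I, ∃ y ∈ I, x * y ≠ x ∧ x * y ≠ y

/-- `G ⊆ X` is a subgroup of the semigroup `X`. -/
def IsSubgroupSet (G : Set X) : Prop :=
  (∀ x ∈ G, ∀ y ∈ G, x * y ∈ G) ∧
    ∃ e ∈ G, (∀ x ∈ G, x * e = x ∧ e * x = x) ∧ ∀ x ∈ G, ∃ y ∈ G, x * y = e ∧ y * x = e

/-- `X` is group-finite: all its subgroups are finite. -/
def GroupFinite : Prop := ∀ G : Set X, IsSubgroupSet X G → G.Finite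

/-- `X` is Clifford+finite: `X ∖ H(X)` is finite. -/
def CliffordPlusFinite : Prop := (Set.univ \ cliffordPart X).Finite

/-- `X` is `E`-commutative: idempotents commute. -/
def ECommutative : Prop := ∀ x ∈ idemSet X, ∀ y ∈ idemSet X, x * y = y * x

end AlgDefs

/-- The Rees congruence associated with an ideal `I` of `X`. -/
def ReesCon {X : Type*} [Semigroup X] (I : Set X) (hI : IsIdealSet X I) : Con X where
  r x y := x = y ∨ (x ∈ I ∧ y ∈ I)
  iseqv :=
    { refl := fun _ => Or.inl rfl
      symm := by rintro x y (rfl | ⟨h1, h2⟩); exacts [Or.inl rfl, Or.inr ⟨h2, h1⟩]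
      trans := by
        rintro x y z (rfl | ⟨h1, h2⟩) (rfl | ⟨h3, h4⟩)
        exacts [Or.inl rfl, Or.inr ⟨h3, h4⟩, Or.inr ⟨h1, h2⟩, Or.inr ⟨h1, h4⟩] }
  mul' := by
    rintro a b c d (rfl | ⟨h1, h2⟩) (rfl | ⟨h3, h4⟩)
    · exact Or.inl rfl
    · exact Or.inr ⟨(hI c h3 a).2, (hI d h4 a).2⟩
    · exact Or.inr ⟨(hI a h1 c).1, (hI b h2 c).1⟩
    · exact Or.inr ⟨(hI a h1 c).1, (hI b h2 d).1⟩

/-- `X` is ideally `T₂S`-closed: all its Rees quotients are `T₂S`-closed. -/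
def IdeallyT2SClosed (X : Type u) [Semigroup X] : Prop :=
  ∀ (I : Set X) (hI : IsIdealSet X I), T2SClosed (ReesCon I hI).Quotient

/-- `X` is ideally `TzS`-closed. -/
def IdeallyTzSClosed (X : Type u) [Semigroup X] : Prop :=
  ∀ (I : Set X) (hI : IsIdealSet X I), TzSClosed (ReesCon I hI).Quotient

/-- A congruence is a semilattice congruence if its quotient is a commutative
semigroup of idempotents. -/
def IsSemilatticeCon {X : Type*} [Semigroup X] (c : Con X) : Prop :=
  (∀ a b : c.Quotient, a * b = b * a) ∧ ∀ a : c.Quotient, a * a = a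

/-- The smallest semilattice congruence `⇕` on `X`, the intersection of all
semilattice congruences. -/
def slCon (X : Type*) [Semigroup X] : Con X := sInf {c | IsSemilatticeCon c}

theorem centerSet_mul_mem {X : Type*} [Semigroup X] {a b : X}
    (ha : a ∈ centerSet X) (hb : b ∈ centerSet X) : a * b ∈ centerSet X := fun t => by
  rw [mul_assoc, hb t, ← mul_assoc, ha t, mul_assoc]

/-- The ideal center `IZ(X) = {z ∈ Z(X) : zX ⊆ Z(X)}`, as a subsemigroup of `X`. -/
def idealCenter (X : Type*) [Semigroup X] : Subsemigroup X where
  carrier := {z | z ∈ centerSet X ∧ ∀ x : X, z * x ∈ centerSet X}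
  mul_mem' := by
    rintro a b ⟨ha, ha'⟩ ⟨hb, hb'⟩
    refine ⟨centerSet_mul_mem ha hb, fun x => ?_⟩
    have h : a * b * x = a * (b * x) := mul_assoc a b x
    rw [h]
    exact centerSet_mul_mem ha (hb' x)

/-- Evaluation of the semigroup polynomial with coefficients `a, l = [a₁, …, aₙ]`:
`x ↦ a * x * a₁ * x * ⋯ * x * aₙ` (computed in `X¹ = WithOne X`). -/
def polyEval {X : Type*} [Semigroup X] (a : WithOne X) (l : List (WithOne X)) (x : X) :
    WithOne X :=
  l.foldl (fun acc b => acc * (x : WithOne X) * b) a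

/-- `f : X → X¹` is a semigroup polynomial of degree `d ≥ 1`. -/
def IsSemigroupPolynomial {X : Type*} [Semigroup X] (f : X → WithOne X) (d : ℕ) : Prop :=
  1 ≤ d ∧ ∃ (a : WithOne X) (l : List (WithOne X)), l.length = d ∧ ∀ x, f x = polyEval a l x

/-- `X` is polybounded. -/
def Polybounded (X : Type*) [Semigroup X] : Prop :=
  ∃ (k : ℕ) (f : Fin k → X → WithOne X) (d : Fin k → ℕ) (b : Fin k → X),
    (∀ i, IsSemigroupPolynomial (f i) (d i)) ∧ ∀ x : X, ∃ i, f i x = (b i : WithOne X)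

/-- `X` is polyfinite. -/
def Polyfinite (X : Type*) [Semigroup X] : Prop :=
  ∃ (d : ℕ) (F : Set X), F.Finite ∧ ∀ x y : X,
    ∃ (f : X → WithOne X) (m : ℕ), m ≤ d ∧ IsSemigroupPolynomial f m ∧
      (∃ u ∈ F, f x = (u : WithOne X)) ∧ ∃ v ∈ F, f y = (v : WithOne X)

/-- `X` is `B`-centrobounded over `B ⊆ E(X)`: there is `n ≥ 1` such that for every
`e ∈ B` and all `x, y ∈ ⋂_{a ∈ B} H_a/a`, if `w` is the inverse of `y*e` in the group
`H_e` and `(x*e)*w ∈ H_e ∩ Z(X)`, then `((x*e)*w)ⁿ` is an idempotent. -/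
def Centrobounded {X : Type*} [Semigroup X] (B : Set X) : Prop :=
  ∃ n : ℕ, ∀ e ∈ B, ∀ x ∈ ⋂ a ∈ B, HeCoideal X a, ∀ y ∈ ⋂ a ∈ B, HeCoideal X a,
    ∀ w ∈ maxSubgroup X e, (y * e) * w = e → w * (y * e) = e →
      (x * e) * w ∈ maxSubgroup X e → (x * e) * w ∈ centerSet X →
        spow ((x * e) * w) n ∈ idemSet X

/-- `B` is an antichain in the natural partial order `e ≤ f ⇔ ef = fe = e` on idempotents. -/
def IsIdemAntichain {X : Type*} [Semigroup X] (B : Set X) : Prop :=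
  ∀ e ∈ B, ∀ f ∈ B, e ≠ f → ¬(e * f = e ∧ f * e = e) ∧ ¬(e * f = f ∧ f * e = f)

section Statement8Aux

variable {X : Type u} [Semigroup X]

lemma maxSubgroup_mul_mem {e a b : X} (ha : a ∈ maxSubgroup X e) (hb : b ∈ maxSubgroup X e) :
    a * b ∈ maxSubgroup X e := by
  obtain ⟨hae, hea, a', ha'e, hea', haa', ha'a⟩ := ha
  obtain ⟨hbe, heb, b', hb'e, heb', hbb', hb'b⟩ := hb
  refine ⟨by rw [mul_assoc, hbe], by rw [← mul_assoc, hea], b' * a', ?_, ?_, ?_, ?_⟩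
  · rw [mul_assoc, ha'e]
  · rw [← mul_assoc, heb']
  · rw [mul_assoc, ← mul_assoc b, hbb', hea', haa']
  · rw [mul_assoc, ← mul_assoc a', ha'a, heb, hb'b]

lemma self_mem_HeCoideal {e : X} (he : e ∈ idemSet X) : e ∈ HeCoideal X e :=
  ⟨rfl, by rw [he]; exact ⟨he, he, e, he, he, he, he⟩⟩

lemma HeCoideal_mul_mem {e x y : X} (hx : x ∈ HeCoideal X e) (hy : y ∈ HeCoideal X e) :
    x * y ∈ HeCoideal X e := by
  obtain ⟨hxc, hxm⟩ := hx
  obtain ⟨hyc, hym⟩ := hy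
  have key : (x * y) * e = (x * e) * (y * e) := calc
    (x * y) * e = x * (y * e) := mul_assoc x y e
    _ = x * (e * (y * e)) := by rw [hym.2.1]
    _ = (x * e) * (y * e) := (mul_assoc x e (y * e)).symm
  refine ⟨?_, ?_⟩
  · rw [mul_assoc x y e, hyc, ← mul_assoc, hxc, mul_assoc]
  · rw [key]; exact maxSubgroup_mul_mem hxm hym

lemma mem_HeCoideal_mul_iff {e : X} (he : e ∈ viableIdems X) (x y : X) :
    x * y ∈ HeCoideal X e ↔ x ∈ HeCoideal X e ∧ y ∈ HeCoideal X e := by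
  constructor
  · intro h
    by_contra hc
    rw [not_and_or] at hc
    rcases hc with hc | hc
    · exact ((he.2 x ⟨trivial, hc⟩ y).1).2 h
    · exact ((he.2 y ⟨trivial, hc⟩ x).2).2 h
  · exact fun ⟨h1, h2⟩ => HeCoideal_mul_mem h1 h2

/-- The two-class semilattice congruence associated with a viable idempotent. -/
def viaCon {e : X} (he : e ∈ viableIdems X) : Con X where
  r x y := (x ∈ HeCoideal X e ↔ y ∈ HeCoideal X e)
  iseqv := ⟨fun _ => Iff.rfl, Iff.symm, Iff.trans⟩
  mul' := by
    intro a b c d h1 h2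
    show a * c ∈ HeCoideal X e ↔ b * d ∈ HeCoideal X e
    have h1' : a ∈ HeCoideal X e ↔ b ∈ HeCoideal X e := h1
    have h2' : c ∈ HeCoideal X e ↔ d ∈ HeCoideal X e := h2
    rw [mem_HeCoideal_mul_iff he, mem_HeCoideal_mul_iff he, h1', h2']

lemma viaCon_semilattice {e : X} (he : e ∈ viableIdems X) : IsSemilatticeCon (viaCon he) := by
  refine ⟨fun a b => ?_, fun a => ?_⟩
  · refine Con.induction_on₂ a b fun x y => ?_
    rw [← Con.coe_mul, ← Con.coe_mul]
    refine (viaCon he).eq.mpr ?_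
    show x * y ∈ HeCoideal X e ↔ y * x ∈ HeCoideal X e
    rw [mem_HeCoideal_mul_iff he, mem_HeCoideal_mul_iff he, and_comm]
  · refine Con.induction_on a fun x => ?_
    rw [← Con.coe_mul]
    refine (viaCon he).eq.mpr ?_
    show x * x ∈ HeCoideal X e ↔ x ∈ HeCoideal X e
    rw [mem_HeCoideal_mul_iff he, and_self]

lemma slCon_le_viaCon {e : X} (he : e ∈ viableIdems X) : slCon X ≤ viaCon he :=
  sInf_le (viaCon_semilattice he)

lemma slCon_mem {e x y : X} (he : e ∈ viableIdems X) (h : slCon X x y)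
    (hx : x ∈ HeCoideal X e) : y ∈ HeCoideal X e := by
  have := slCon_le_viaCon he h
  exact (show x ∈ HeCoideal X e ↔ y ∈ HeCoideal X e from this).mp hx

lemma slCon_comm (x y : X) : slCon X (x * y) (y * x) := by
  refine (fun c hc => ?_ : ∀ c : Con X, c ∈ {c | IsSemilatticeCon c} → c (x * y) (y * x))
  refine c.eq.mp ?_
  rw [Con.coe_mul, Con.coe_mul]
  exact hc.1 _ _

end Statement8Aux

theorem statement8 (X : Type*) [Semigroup X] :
    (∀ e ∈ viableIdems X, ∀ f ∈ viableIdems X,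
        ((e : (slCon X).Quotient) = (f : (slCon X).Quotient)) → e = f) ∧
    (∀ e ∈ viableIdems X, ∀ f ∈ viableIdems X,
        ((e * f = e ∧ f * e = e) ↔
          (e : (slCon X).Quotient) * (f : (slCon X).Quotient) = (e : (slCon X).Quotient))) := by
  constructor
  · intro e he f hf hq
    have hslc : slCon X e f := (slCon X).eq.mp hq
    have hfAe : f ∈ HeCoideal X e := slCon_mem he hslc (self_mem_HeCoideal he.1)
    have heAf : e ∈ HeCoideal X f :=
      slCon_mem hf ((slCon X).symm hslc) (self_mem_HeCoideal hf.1)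
    obtain ⟨hfc, hfm⟩ := hfAe
    obtain ⟨hec, hem⟩ := heAf
    rw [hfc] at hfm
    obtain ⟨hxe, hex, y, hye, hey, hxy, hyx⟩ := hfm
    obtain ⟨hxf, hfx, w, hwf, hfw, hxw, hwx⟩ := hem
    have h1 : f = e * f := calc
      f = (e * f) * w := hxw.symm
      _ = (e * (e * f)) * w := by rw [hex]
      _ = e * ((e * f) * w) := mul_assoc e (e * f) w
      _ = e * f := by rw [hxw]
    have h2 : e = e * f := calc
      e = y * (e * f) := hyx.symm
      _ = y * ((e * f) * f) := by rw [hxf]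
      _ = (y * (e * f)) * f := (mul_assoc y (e * f) f).symm
      _ = e * f := by rw [hyx]
    rw [h2, ← h1]
  · intro e he f hf
    constructor
    · intro ⟨h1, _⟩
      rw [← Con.coe_mul, h1]
    · intro hq
      have hef : slCon X (e * f) e := (slCon X).eq.mp (by rw [Con.coe_mul]; exact hq)
      have hfe : slCon X (f * e) e := (slCon X).trans (slCon_comm f e) hef
      have hefA : e * f ∈ HeCoideal X e :=
        slCon_mem he ((slCon X).symm hef) (self_mem_HeCoideal he.1)
      have hfeA : f * e ∈ HeCoideal X e :=
        slCon_mem he ((slCon X).symm hfe) (self_mem_HeCoideal he.1)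
      have hee : e * e = e := he.1
      have hff : f * f = f := hf.1
      have hefe : (e * f) * e = e * f := calc
        (e * f) * e = e * (e * f) := hefA.1
        _ = (e * e) * f := (mul_assoc e e f).symm
        _ = e * f := by rw [hee]
      have hcomm : f * e = e * f := calc
        f * e = (f * e) * e := by rw [mul_assoc, hee]
        _ = e * (f * e) := hfeA.1
        _ = (e * f) * e := (mul_assoc e f e).symm
        _ = e * f := hefe
      have hmem : e * f ∈ maxSubgroup X e := by
        have := hefA.2
        rwa [hefe] at this
      have hidem : (e * f) * (e * f) = e * f := calc
        (e * f) * (e * f) = e * (f * (e * f)) := mul_assoc e f (e * f)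
        _ = e * ((f * e) * f) := by rw [mul_assoc f e f]
        _ = e * ((e * f) * f) := by rw [hcomm]
        _ = e * (e * (f * f)) := by rw [mul_assoc e f f]
        _ = e * (e * f) := by rw [hff]
        _ = (e * e) * f := (mul_assoc e e f).symm
        _ = e * f := by rw [hee]
      obtain ⟨hxe, hex, y, hye, hey, hxy, hyx⟩ := hmem
      have h1 : e * f = e := calc
        e * f = (e * f) * e := hxe.symm
        _ = (e * f) * ((e * f) * y) := by rw [hxy]
        _ = ((e * f) * (e * f)) * y := (mul_assoc (e * f) (e * f) y).symm
        _ = (e * f) * y := by rw [hidem]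
        _ = e := hxy
      exact ⟨h1, by rw [hcomm, h1]⟩
end

section
/- If a semigroup X is projectively TzS-closed, then the poset X/⇕ (the semilattice reflection of X) and the poset VE(X) of viable idempotents are chain-finite (every infinite subset contains two ≤-incomparable elements). -/
universe u

open Set TopologicalSpace

/-!
A `TzS`-closed semilattice is chain-finite: an infinite chain contains a strictly monotone
sequence `a` (after passing to the order dual if it decreases). Any partially ordered semigroup
embeds, via `x ↦ ↓x`, into the semigroup of its lower sets with product `↓(s · t)`, topologised by
the clopen sets `{s | F ⊆ s ⊆ t}` with `F` finite. The image is discrete, because `↓x` is the only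
lower set between `{x}` and `↓x`; but `⋃ₙ ↓aₙ` lies in its closure and not in it.

For a viable idempotent `e`, `X ∖ H_e/e` is an ideal, so membership in `H_e/e` is a semilattice
congruence. It separates `f ≤ e` from `e` unless `f = e`, since `H_e` has no other idempotent; hence
`⇕` is injective on a chain of viable idempotents and maps it onto a chain of `X/⇕`.
-/

open Pointwise

/-- The lower sets of a preordered semigroup, multiplied by `s * t = ↓(s · t)`. -/
def LowerSetSemigroup (Q : Type u) [Preorder Q] : Type u := LowerSet Q

namespace LowerSetSemigroup

section Topology

variable {Q : Type u} [Preorder Q]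

instance : SetLike (LowerSetSemigroup Q) Q := inferInstanceAs (SetLike (LowerSet Q) Q)

theorem mem_of_le {s : LowerSetSemigroup Q} {x y : Q} (hxy : x ≤ y) (hy : y ∈ s) : x ∈ s :=
  (s : LowerSet Q).lower hxy hy

def between (F : Set Q) (t : LowerSetSemigroup Q) : Set (LowerSetSemigroup Q) :=
  {s | F ⊆ s ∧ (s : Set Q) ⊆ t}

instance : TopologicalSpace (LowerSetSemigroup Q) :=
  generateFrom {b | ∃ F t, F.Finite ∧ b = between F t}

theorem isTopologicalBasis_between :
    IsTopologicalBasis {b : Set (LowerSetSemigroup Q) | ∃ F t, F.Finite ∧ b = between F t} := by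
  refine ⟨?_, ?_, rfl⟩
  · rintro _ ⟨F₁, t₁, hF₁, rfl⟩ _ ⟨F₂, t₂, hF₂, rfl⟩ s ⟨⟨hF₁s, hst₁⟩, hF₂s, hst₂⟩
    refine ⟨between (F₁ ∪ F₂) s, ⟨F₁ ∪ F₂, s, hF₁.union hF₂, rfl⟩,
      ⟨union_subset hF₁s hF₂s, Subset.rfl⟩, ?_⟩
    rintro r ⟨hFr, hrs⟩
    exact ⟨⟨subset_union_left.trans hFr, hrs.trans hst₁⟩,
      subset_union_right.trans hFr, hrs.trans hst₂⟩
  · refine eq_univ_of_forall fun s => ?_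
    exact ⟨between ∅ s, ⟨∅, s, finite_empty, rfl⟩, empty_subset _, Subset.rfl⟩

theorem isOpen_between {F : Set Q} (hF : F.Finite) (t : LowerSetSemigroup Q) :
    IsOpen (between F t) :=
  isTopologicalBasis_between.isOpen ⟨F, t, hF, rfl⟩

theorem isClosed_between (F : Set Q) (t : LowerSetSemigroup Q) : IsClosed (between F t) := by
  rw [← isOpen_compl_iff, isOpen_iff_forall_mem_open]
  intro s hs
  by_cases hFs : F ⊆ s
  · obtain ⟨z, hzs, hzt⟩ := not_subset.mp fun hst => hs ⟨hFs, hst⟩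
    refine ⟨between {z} s, fun r hr hr' => hzt (hr'.2 (hr.1 rfl)),
      isOpen_between (finite_singleton z) s, singleton_subset_iff.2 hzs, Subset.rfl⟩
  · obtain ⟨x, hxF, hxs⟩ := not_subset.mp hFs
    exact ⟨between ∅ s, fun r hr hr' => hxs (hr.2 (hr'.1 hxF)),
      isOpen_between finite_empty s, empty_subset _, Subset.rfl⟩

theorem hasClopenBasis : HasClopenBasis (LowerSetSemigroup Q) :=
  ⟨_, by rintro _ ⟨F, t, hF, rfl⟩; exact ⟨isClosed_between F t, isOpen_between hF t⟩,
    isTopologicalBasis_between⟩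

instance : T1Space (LowerSetSemigroup Q) := by
  refine t1Space_iff_exists_open.mpr fun s t hst => ?_
  by_cases h : (s : Set Q) ⊆ t
  · exact ⟨between ∅ s, isOpen_between finite_empty s, ⟨empty_subset _, Subset.rfl⟩,
      fun ht => hst (SetLike.coe_injective (h.antisymm ht.2))⟩
  · obtain ⟨x, hxs, hxt⟩ := not_subset.mp h
    exact ⟨between {x} s, isOpen_between (finite_singleton x) s,
      ⟨singleton_subset_iff.2 hxs, Subset.rfl⟩, fun ht => hxt (ht.1 rfl)⟩

def iUnionIic (a : ℕ → Q) : LowerSetSemigroup Q :=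
  (⨆ n, LowerSet.Iic (a n) : LowerSet Q)

theorem mem_iUnionIic {a : ℕ → Q} {x : Q} : x ∈ iUnionIic a ↔ ∃ n, x ≤ a n := by
  change x ∈ (⨆ n, LowerSet.Iic (a n) : LowerSet Q) ↔ _
  simp

end Topology

section Mul

variable {Q : Type u} [Semigroup Q] [Preorder Q]

instance : Mul (LowerSetSemigroup Q) := ⟨fun s t => lowerClosure ((s : Set Q) * t)⟩

theorem mem_mul {s t : LowerSetSemigroup Q} {x : Q} :
    x ∈ s * t ↔ ∃ u ∈ s, ∃ v ∈ t, x ≤ u * v := by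
  change x ∈ lowerClosure _ ↔ _
  simp only [mem_lowerClosure, Set.mem_mul]
  constructor
  · rintro ⟨_, ⟨u, hu, v, hv, rfl⟩, hx⟩
    exact ⟨u, hu, v, hv, hx⟩
  · rintro ⟨u, hu, v, hv, hx⟩
    exact ⟨_, ⟨u, hu, v, hv, rfl⟩, hx⟩

instance : ContinuousMul (LowerSetSemigroup Q) := by
  refine ⟨continuous_generateFrom_iff.2 ?_⟩
  rintro _ ⟨F, t, hF, rfl⟩
  rw [isOpen_prod_iff]
  rintro s₁ s₂ ⟨hFs, hst⟩
  have hfac : ∀ x : F, ∃ u ∈ s₁, ∃ v ∈ s₂, (x : Q) ≤ u * v := fun x => mem_mul.1 (hFs x.2)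
  choose u hu v hv huv using hfac
  have := hF.to_subtype
  refine ⟨between (range u) s₁, between (range v) s₂, isOpen_between (finite_range u) _,
    isOpen_between (finite_range v) _, ⟨range_subset_iff.2 hu, Subset.rfl⟩,
    ⟨range_subset_iff.2 hv, Subset.rfl⟩, ?_⟩
  rintro ⟨r₁, r₂⟩ ⟨⟨hur, hr₁⟩, hvr, hr₂⟩
  refine ⟨fun x hx => mem_mul.2 ⟨_, hur ⟨⟨x, hx⟩, rfl⟩, _, hvr ⟨⟨x, hx⟩, rfl⟩, huv ⟨x, hx⟩⟩,
    fun x hx => hst ?_⟩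
  obtain ⟨a, ha, b, hb, hx⟩ := mem_mul.1 hx
  exact mem_mul.2 ⟨a, hr₁ ha, b, hr₂ hb, hx⟩

end Mul

section OrderedSemigroup

variable {Q : Type u} [Semigroup Q] [Preorder Q] [MulLeftMono Q] [MulRightMono Q]

instance : Semigroup (LowerSetSemigroup Q) where
  mul_assoc s t r := SetLike.ext fun x => by
    simp only [mem_mul]
    constructor
    · rintro ⟨p, ⟨u, hu, v, hv, hp⟩, w, hw, hx⟩
      refine ⟨u, hu, v * w, ⟨v, hv, w, hw, le_rfl⟩, ?_⟩
      exact hx.trans ((mul_le_mul_left hp w).trans_eq (mul_assoc u v w))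
    · rintro ⟨u, hu, q, ⟨v, hv, w, hw, hq⟩, hx⟩
      refine ⟨u * v, ⟨u, hu, v, hv, le_rfl⟩, w, hw, ?_⟩
      exact hx.trans ((mul_le_mul_right hq u).trans_eq (mul_assoc u v w).symm)

def principal : Q →ₙ* LowerSetSemigroup Q where
  toFun := LowerSet.Iic
  map_mul' x y := SetLike.ext fun z => by
    change z ≤ x * y ↔ z ∈ _
    refine ⟨fun h => mem_mul.2 ⟨x, le_rfl, y, le_rfl, h⟩, fun h => ?_⟩
    obtain ⟨u, hu, v, hv, hz⟩ := mem_mul.1 h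
    exact hz.trans (mul_le_mul' hu hv)

theorem between_principal (q : Q) : between {q} (principal q) = {principal q} := by
  ext s
  refine ⟨fun ⟨hqs, hsq⟩ => SetLike.coe_injective (hsq.antisymm fun x hx => ?_), ?_⟩
  · exact mem_of_le hx (hqs rfl)
  · rintro rfl
    exact ⟨singleton_subset_iff.2 (le_refl q), Subset.rfl⟩

theorem discreteTopology_range_principal : DiscreteTopology (range (principal (Q := Q))) := by
  refine discreteTopology_iff_isOpen_singleton.2 ?_
  rintro ⟨_, q, rfl⟩
  have hq : IsOpen {principal q} := between_principal q ▸ isOpen_between (finite_singleton q) _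
  convert hq.preimage continuous_subtype_val
  ext
  simp [Subtype.ext_iff]

theorem iUnionIic_mem_closure_range_principal {a : ℕ → Q} (ha : Monotone a) :
    iUnionIic a ∈ closure (range principal) := by
  rw [isTopologicalBasis_between.mem_closure_iff]
  rintro _ ⟨F, t, hF, rfl⟩ ⟨hFa, hat⟩
  have hdir : Directed (· ⊆ ·) fun n => Set.Iic (a n) :=
    Monotone.directed_le fun m n h => Set.Iic_subset_Iic.2 (ha h)
  obtain ⟨N, hN⟩ := hdir.exists_mem_subset_of_finset_subset_biUnion (s := hF.toFinset)
    (by simpa [Set.subset_def, mem_iUnionIic] using hFa)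
  refine ⟨principal (a N), ⟨fun x hx => hN (by simpa using hx), fun x hx => hat ?_⟩, a N, rfl⟩
  exact mem_iUnionIic.2 ⟨N, hx⟩

end OrderedSemigroup

variable {Q : Type u} [Semigroup Q] [PartialOrder Q] [MulLeftMono Q] [MulRightMono Q]

theorem principal_injective : Function.Injective (principal (Q := Q)) :=
  LowerSet.Iic_injective

theorem iUnionIic_notMem_range_principal {a : ℕ → Q} (ha : StrictMono a) :
    iUnionIic a ∉ range principal := by
  rintro ⟨q, hq⟩
  have hqa : q ∈ iUnionIic a := hq ▸ le_refl q
  obtain ⟨m, hqm⟩ := mem_iUnionIic.1 hqa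
  have haq : a (m + 1) ≤ q := (hq ▸ mem_iUnionIic.2 ⟨m + 1, le_rfl⟩ : a (m + 1) ∈ principal q)
  exact (ha m.lt_succ_self).not_ge (haq.trans hqm)

end LowerSetSemigroup

open LowerSetSemigroup in
theorem not_tzSClosed_of_strictMono {Q : Type u} [Semigroup Q] [PartialOrder Q] [MulLeftMono Q]
    [MulRightMono Q] {a : ℕ → Q} (ha : StrictMono a) : ¬ TzSClosed Q := fun hQ =>
  iUnionIic_notMem_range_principal ha <|
    (hQ _ hasClopenBasis principal principal_injective
      discreteTopology_range_principal).closure_subset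
        (iUnionIic_mem_closure_range_principal ha.monotone)

theorem chainFinite_of_tzSClosed {Q : Type u} [Semigroup Q] (hcomm : ∀ a b : Q, a * b = b * a)
    (hidem : ∀ a : Q, a * a = a) (hQ : TzSClosed Q) : ChainFinite Q := by
  classical
  intro S hS
  by_contra! hS_total
  -- `x ≤ y ↔ x * y = x` makes `Q` a meet-semilattice with `⊓ = *`; a decreasing sequence is
  -- increasing in `Qᵒᵈ`, which is the same semigroup.
  let : Min Q := ⟨(· * ·)⟩
  let : SemilatticeInf Q := SemilatticeInf.mk' hcomm mul_assoc hidem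
  have : MulLeftMono Q := ⟨fun x _ _ h => inf_le_inf_left x h⟩
  have : MulRightMono Q := ⟨fun x _ _ h => inf_le_inf_right x h⟩
  have hchain : IsChain (· ≤ ·) S := by
    intro x hx y hy _
    by_cases hxy : x * y = x
    · exact Or.inl (inf_eq_left.1 hxy)
    · exact Or.inr (inf_eq_left.1 ((hcomm y x).trans (hS_total x hx y hy hxy)))
  let := hchain.linearOrder
  have : Infinite S := hS.to_subtype
  obtain ⟨f, hf | hf⟩ := Infinite.exists_strictMono_or_strictAnti S
  · exact not_tzSClosed_of_strictMono (a := fun n => (f n : Q)) (fun _ _ h => hf h) hQ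
  · exact not_tzSClosed_of_strictMono (a := fun n => OrderDual.toDual (f n : Q))
      (fun _ _ h => hf h) hQ

section Semilattice

variable {X : Type*} [Semigroup X]

theorem slCon_iff {x y : X} : slCon X x y ↔ ∀ c : Con X, IsSemilatticeCon c → c x y :=
  Iff.rfl

theorem IsSemilatticeCon.of_rel {c : Con X} (hcomm : ∀ x y, c (x * y) (y * x))
    (hidem : ∀ x, c (x * x) x) : IsSemilatticeCon c :=
  ⟨fun p q => Con.induction_on₂ p q fun x y => (Con.eq c).2 (hcomm x y),
    fun p => Con.induction_on p fun x => (Con.eq c).2 (hidem x)⟩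

theorem isSemilatticeCon_slCon : IsSemilatticeCon (slCon X) :=
  .of_rel (fun x y c hc => (Con.eq c).1 (hc.1 x y)) (fun x c hc => (Con.eq c).1 (hc.2 x))

end Semilattice

section Viable

variable {X : Type*} [Semigroup X] {e : X}

theorem mul_mem_maxSubgroup {x y : X} (hx : x ∈ maxSubgroup X e) (hy : y ∈ maxSubgroup X e) :
    x * y ∈ maxSubgroup X e := by
  obtain ⟨hxe, hex, x', hx'e, hex', hxx', hx'x⟩ := hx
  obtain ⟨hye, hey, y', hy'e, hey', hyy', hy'y⟩ := hy
  refine ⟨by rw [mul_assoc, hye], by rw [← mul_assoc, hex], y' * x', by rw [mul_assoc, hx'e],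
    by rw [← mul_assoc, hey'], ?_, ?_⟩
  · calc x * y * (y' * x') = x * ((y * y') * x') := by simp only [mul_assoc]
      _ = e := by rw [hyy', hex', hxx']
  · calc y' * x' * (x * y) = y' * ((x' * x) * y) := by simp only [mul_assoc]
      _ = e := by rw [hx'x, hey, hy'y]

theorem eq_of_mem_maxSubgroup_of_idem {x : X} (hx : x ∈ maxSubgroup X e) (hxx : x * x = x) :
    x = e := by
  obtain ⟨hxe, -, y, -, -, hxy, -⟩ := hx
  calc x = x * (x * y) := by rw [hxy, hxe]
    _ = e := by rw [← mul_assoc, hxx, hxy]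

theorem self_mem_heCoideal (he : e ∈ idemSet X) : e ∈ HeCoideal X e :=
  ⟨rfl, by rw [he]; exact ⟨he, he, e, he, he, he, he⟩⟩

theorem mul_mem_heCoideal {x y : X} (hx : x ∈ HeCoideal X e) (hy : y ∈ HeCoideal X e) :
    x * y ∈ HeCoideal X e := by
  obtain ⟨hxc, hxm⟩ := hx
  obtain ⟨hyc, hym⟩ := hy
  have hxy : x * y * e = x * e * (y * e) := by rw [mul_assoc x e, hym.2.1, mul_assoc]
  refine ⟨?_, hxy ▸ mul_mem_maxSubgroup hxm hym⟩
  rw [mul_assoc, hyc, ← mul_assoc, hxc, mul_assoc]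

theorem mul_mem_heCoideal_iff (he : e ∈ viableIdems X) {x y : X} :
    x * y ∈ HeCoideal X e ↔ x ∈ HeCoideal X e ∧ y ∈ HeCoideal X e := by
  refine ⟨fun hxy => ⟨?_, ?_⟩, fun ⟨hx, hy⟩ => mul_mem_heCoideal hx hy⟩
  · by_contra hx
    exact (he.2 x ⟨trivial, hx⟩ y).1.2 hxy
  · by_contra hy
    exact (he.2 y ⟨trivial, hy⟩ x).2.2 hxy

def heCoidealCon (he : e ∈ viableIdems X) : Con X where
  r x y := x ∈ HeCoideal X e ↔ y ∈ HeCoideal X e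
  iseqv := ⟨fun _ => Iff.rfl, Iff.symm, Iff.trans⟩
  mul' h₁ h₂ := by
    simp only [mul_mem_heCoideal_iff he]
    exact and_congr h₁ h₂

theorem isSemilatticeCon_heCoidealCon (he : e ∈ viableIdems X) :
    IsSemilatticeCon (heCoidealCon he) :=
  .of_rel (fun _ _ => (mul_mem_heCoideal_iff he).trans
      (and_comm.trans (mul_mem_heCoideal_iff he).symm))
    fun _ => (mul_mem_heCoideal_iff he).trans and_self_iff

theorem eq_of_slCon_of_mul_eq {f : X} (he : e ∈ viableIdems X) (hf : f ∈ idemSet X)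
    (hfe : f * e = f) (h : slCon X f e) : f = e := by
  have hfH : f ∈ HeCoideal X e :=
    (slCon_iff.1 h _ (isSemilatticeCon_heCoidealCon he)).2 (self_mem_heCoideal he.1)
  exact eq_of_mem_maxSubgroup_of_idem (hfe ▸ hfH.2) hf

end Viable

theorem exists_incomparable_of_subset_viableIdems {X : Type*} [Semigroup X]
    (hX : ChainFinite (slCon X).Quotient) {S : Set X} (hSV : S ⊆ viableIdems X)
    (hS : S.Infinite) :
    ∃ a ∈ S, ∃ b ∈ S, ¬(a * b = a ∧ b * a = a) ∧ ¬(b * a = b ∧ a * b = b) := by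
  by_contra! hS_comparable
  have hcomp : ∀ a ∈ S, ∀ b ∈ S, a * b = a ∨ b * a = b := fun a ha b hb => by
    by_cases hab : a * b = a
    · exact Or.inl hab
    · exact Or.inr (hS_comparable a ha b hb fun h => absurd h hab).1
  have hinj : InjOn (fun x : X => (x : (slCon X).Quotient)) S := fun a ha b hb hab => by
    have hab' : slCon X a b := (Con.eq _).1 hab
    rcases hcomp a ha b hb with h | h
    · exact eq_of_slCon_of_mul_eq (hSV hb) (hSV ha).1 h hab'
    · exact (eq_of_slCon_of_mul_eq (hSV ha) (hSV hb).1 h ((slCon X).symm hab')).symm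
  obtain ⟨_, ⟨a, ha, rfl⟩, _, ⟨b, hb, rfl⟩, hab, hba⟩ := hX _ (hS.image hinj)
  rcases hcomp a ha b hb with h | h
  · exact hab (by rw [← Con.coe_mul, h])
  · exact hba (by rw [isSemilatticeCon_slCon.1, ← Con.coe_mul, h])

theorem statement10 (X : Type u) [Semigroup X] (hX : ProjectivelyTzSClosed X) :
    (∀ S : Set (slCon X).Quotient, S.Infinite →
        ∃ a ∈ S, ∃ b ∈ S, a * b ≠ a ∧ b * a ≠ b) ∧
    (∀ S : Set X, S ⊆ viableIdems X → S.Infinite →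
        ∃ a ∈ S, ∃ b ∈ S, ¬(a * b = a ∧ b * a = a) ∧ ¬(b * a = b ∧ a * b = b)) := by
  have hsl : ChainFinite (slCon X).Quotient :=
    chainFinite_of_tzSClosed isSemilatticeCon_slCon.1 isSemilatticeCon_slCon.2 (hX (slCon X))
  refine ⟨fun S hS => ?_, fun S hSV hS => exists_incomparable_of_subset_viableIdems hsl hSV hS⟩
  obtain ⟨a, ha, b, hb, hab, hba⟩ := hsl S hS
  exact ⟨a, ha, b, hb, hab, isSemilatticeCon_slCon.1 b a ▸ hba⟩
end

section
/- Every TzS-closed semigroup is zero-closed: if a semigroup X is TzS-closed, then for every Hausdorff topology on the 0-extension X⁰ = X ∪ {0} making X⁰ a topological semigroup, the set X is closed in X⁰. -/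
universe u

open Set TopologicalSpace

/-!
If `X` is not closed in `X⁰`, then `0` lies in its closure. Refine the topology by isolating
every point of `X` while keeping the neighbourhoods of `0`. Since `0` is absorbing,
multiplication stays continuous; the refined space is still `T₁`, and every set containing `0`
is closed there, so it is zero-dimensional; `X` becomes discrete, yet `0` is still in its closure.
This contradicts `TzS`-closedness.
-/

section DiscreteAwayFrom

open Filter Topology

/-- The topology in which every point other than `z` is isolated and `z` keeps its
neighbourhoods. -/
abbrev discreteAwayFrom {Y : Type*} [TopologicalSpace Y] (z : Y) : TopologicalSpace Y :=
  nhdsAdjoint z (𝓝 z)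

variable {Y : Type*} [TopologicalSpace Y] (z : Y)

theorem nhds_discreteAwayFrom_self : @nhds Y (discreteAwayFrom z) z = 𝓝 z := by
  rw [nhds_nhdsAdjoint_same, sup_of_le_right (pure_le_nhds z)]

theorem discreteAwayFrom_le : discreteAwayFrom z ≤ ‹TopologicalSpace Y› :=
  (gc_nhds z).l_u_le _

theorem isOpen_discreteAwayFrom_of_notMem {s : Set Y} (hs : z ∉ s) :
    IsOpen[discreteAwayFrom z] s :=
  fun h => absurd h hs

theorem isClosed_discreteAwayFrom_of_mem {s : Set Y} (hs : z ∈ s) :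
    IsClosed[discreteAwayFrom z] s :=
  @isOpen_compl_iff _ _ (discreteAwayFrom z) |>.1 (isOpen_discreteAwayFrom_of_notMem z (· hs))

theorem t1Space_discreteAwayFrom [T1Space Y] : @T1Space Y (discreteAwayFrom z) :=
  t1Space_antitone (discreteAwayFrom_le z) ‹_›

theorem hasClopenBasis_discreteAwayFrom [T1Space Y] :
    @HasClopenBasis Y (discreteAwayFrom z) := by
  have := t1Space_discreteAwayFrom z
  have hclosed (u : Set Y) : z ∈ u → IsClosed[discreteAwayFrom z] u :=
    isClosed_discreteAwayFrom_of_mem z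
  let _ := discreteAwayFrom z
  refine ⟨{s | IsClopen s}, fun s hs => hs, isTopologicalBasis_of_isOpen_of_nhds
    (fun s hs => hs.isOpen) fun y u hyu hu => ?_⟩
  rcases eq_or_ne y z with rfl | hy
  · exact ⟨u, ⟨hclosed u hyu, hu⟩, hyu, subset_rfl⟩
  · exact ⟨{y}, ⟨isClosed_singleton, isOpen_singleton_nhdsAdjoint _ hy⟩, rfl,
      Set.singleton_subset_iff.2 hyu⟩

theorem discreteTopology_discreteAwayFrom_of_notMem {s : Set Y} (hs : z ∉ s) :
    @DiscreteTopology s (@instTopologicalSpaceSubtype Y _ (discreteAwayFrom z)) := by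
  let _ := discreteAwayFrom z
  refine discreteTopology_subtype_iff'.2 fun y hy => ⟨{y}, ?_, Set.singleton_inter_of_mem hy⟩
  exact isOpen_singleton_nhdsAdjoint _ (ne_of_mem_of_not_mem hy hs)

theorem isClosed_of_isClosed_discreteAwayFrom {s : Set Y} (hs : IsClosed[discreteAwayFrom z] s)
    (hsz : ∀ y ∉ s, y = z) : IsClosed s := by
  refine closure_subset_iff_isClosed.1 fun y hy => ?_
  by_contra hys
  rw [hsz y hys] at hy hys
  -- an open set of `nhdsAdjoint z (𝓝 z)` containing `z` is by definition a neighbourhood of `z`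
  have hcompl : sᶜ ∈ 𝓝 z := @IsClosed.isOpen_compl Y (discreteAwayFrom z) s hs hys
  obtain ⟨w, hws, hw⟩ := mem_closure_iff_nhds.1 hy sᶜ hcompl
  exact hws hw

theorem continuousMul_discreteAwayFrom_zero {M₀ : Type*} [MulZeroClass M₀] [TopologicalSpace M₀]
    [ContinuousMul M₀] : @ContinuousMul M₀ (discreteAwayFrom 0) _ := by
  have htendsto : ∀ p q : M₀, Tendsto (fun r : M₀ × M₀ => r.1 * r.2)
      (@nhds M₀ (discreteAwayFrom 0) p ×ˢ @nhds M₀ (discreteAwayFrom 0) q)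
      (@nhds M₀ (discreteAwayFrom 0) (p * q)) := fun p q => by
    by_cases hpq : p * q = 0
    · have hmul : Tendsto (fun r : M₀ × M₀ => r.1 * r.2) (𝓝 p ×ˢ 𝓝 q) (𝓝 0) := by
        rw [← nhds_prod_eq, ← hpq]; exact tendsto_mul
      have hle := discreteAwayFrom_le (0 : M₀)
      rw [hpq, nhds_discreteAwayFrom_self]
      exact hmul.mono_left (Filter.prod_mono (nhds_mono hle) (nhds_mono hle))
    · rw [nhds_nhdsAdjoint_of_ne _ (left_ne_zero_of_mul hpq),
        nhds_nhdsAdjoint_of_ne _ (right_ne_zero_of_mul hpq), prod_pure_pure]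
      exact @tendsto_pure_nhds M₀ (discreteAwayFrom 0) _ _ _
  let _ := discreteAwayFrom (0 : M₀)
  exact ⟨continuous_iff_continuousAt.2 fun r => by
    rw [ContinuousAt, nhds_prod_eq]; exact htendsto r.1 r.2⟩

end DiscreteAwayFrom

theorem statement13 (X : Type u) [Semigroup X] (hX : TzSClosed X) :
    ∀ t : TopologicalSpace (WithZero X),
      @ContinuousMul (WithZero X) t _ → @T2Space (WithZero X) t →
        @IsClosed (WithZero X) t (Set.range (fun x : X => (x : WithZero X))) := by
  intro t _ _
  have hzero : (0 : WithZero X) ∉ Set.range (fun x : X => (x : WithZero X)) :=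
    fun ⟨_, hx⟩ => WithZero.coe_ne_zero hx
  refine isClosed_of_isClosed_discreteAwayFrom 0 ?_ fun y hy => ?_
  · exact @hX (WithZero X) _ (discreteAwayFrom 0) continuousMul_discreteAwayFrom_zero
      (t1Space_discreteAwayFrom 0) (hasClopenBasis_discreteAwayFrom 0)
      ⟨(↑), fun _ _ => WithZero.coe_mul _ _⟩ WithZero.coe_injective
      (discreteTopology_discreteAwayFrom_of_notMem 0 hzero)
  · by_contra hy0
    exact hy (WithZero.ne_zero_iff_exists.1 hy0)
end

section
/- Every polybounded semigroup is polyfinite. -/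
universe u

open Set TopologicalSpace

section CompLemmas

variable {M : Type*} [Monoid M]

/-- product of `s * b` over `b ∈ l`. -/
def wprod (s : M) (l : List M) : M := (l.map (s * ·)).prod

theorem foldl_eq_wprod (l : List M) (a s : M) :
    l.foldl (fun acc b => acc * s * b) a = a * wprod s l := by
  induction l generalizing a with
  | nil => simp [wprod]
  | cons b bs ih =>
    show List.foldl _ (a * s * b) bs = _
    rw [ih]
    simp [wprod, mul_assoc]

/-- The coefficient list of the composition of two semigroup polynomials. -/
def compL (a' : M) (ld : List M) (c : M) : List M → List M
  | [] => []
  | [b] => ld ++ [c * b]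
  | b :: bs => ld ++ [c * b * a'] ++ compL a' ld c bs

theorem compL_length (a' : M) (ld : List M) (c : M) (m : List M) :
    (compL a' ld c m).length = m.length * (ld.length + 1) := by
  induction m with
  | nil => simp [compL]
  | cons b bs ih =>
    cases bs with
    | nil => simp [compL]
    | cons b' bs' =>
      show (ld ++ [c * b * a'] ++ compL a' ld c (b' :: bs')).length = _
      rw [List.length_append, ih]
      simp [List.length_cons]
      ring

theorem wprod_append (s : M) (l₁ l₂ : List M) :
    wprod s (l₁ ++ l₂) = wprod s l₁ * wprod s l₂ := by
  simp [wprod]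

theorem wprod_compL (a' c s : M) (ld : List M) (m : List M) (hm : m ≠ []) :
    a' * wprod s (compL a' ld c m) = wprod (a' * wprod s (ld ++ [c])) m := by
  induction m with
  | nil => cases hm rfl
  | cons b bs ih =>
    cases bs with
    | nil => simp [compL, wprod, mul_assoc]
    | cons b' bs' =>
      show a' * wprod s (ld ++ [c * b * a'] ++ compL a' ld c (b' :: bs')) = _
      rw [wprod_append, show wprod (a' * wprod s (ld ++ [c])) (b :: b' :: bs')
            = (a' * wprod s (ld ++ [c]) * b) * wprod (a' * wprod s (ld ++ [c])) (b' :: bs')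
          from by simp [wprod, mul_assoc],
        ← ih (List.cons_ne_nil _ _)]
      simp [wprod, mul_assoc]

end CompLemmas

section PolyAux
variable {X : Type*} [Semigroup X]

theorem polyEval_comp (a a' c : WithOne X) (ld m : List (WithOne X)) (hm : m ≠ [])
    (t : X) (w : X) (hw : (w : WithOne X) = polyEval a' (ld ++ [c]) t) :
    polyEval a m w = polyEval (a * a') (compL a' ld c m) t := by
  unfold polyEval at *
  rw [foldl_eq_wprod, foldl_eq_wprod]
  rw [foldl_eq_wprod] at hw
  rw [hw, ← wprod_compL _ _ _ _ _ hm, ← mul_assoc]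

theorem coe_mul_right (w : WithOne X) (v : X) : ∃ u : X, w * ↑v = ↑u := by
  rcases eq_or_ne w 1 with rfl | h
  · exact ⟨v, one_mul _⟩
  · obtain ⟨b, rfl⟩ := WithOne.ne_one_iff_exists.mp h
    exact ⟨b * v, (WithOne.coe_mul b v).symm⟩

theorem coe_mul_left (v : X) (w : WithOne X) : ∃ u : X, (↑v) * w = ↑u := by
  rcases eq_or_ne w 1 with rfl | h
  · exact ⟨v, mul_one _⟩
  · obtain ⟨b, rfl⟩ := WithOne.ne_one_iff_exists.mp h
    exact ⟨v * b, (WithOne.coe_mul v b).symm⟩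

theorem foldl_coe (l : List (WithOne X)) (u : X) (x : X) :
    ∃ v : X, List.foldl (fun acc b => acc * (x : WithOne X) * b) (↑u) l = ↑v := by
  induction l generalizing u with
  | nil => exact ⟨u, rfl⟩
  | cons b bs ih =>
    obtain ⟨w1, hw1⟩ := coe_mul_left (X := X) (u * x) b
    obtain ⟨v, hv⟩ := ih w1
    refine ⟨v, ?_⟩
    have h2 : (↑u : WithOne X) * ↑x * b = ↑w1 := by rw [← WithOne.coe_mul]; exact hw1
    rw [List.foldl_cons, h2]; exact hv

theorem polyEval_exists_coe (a : WithOne X) (l : List (WithOne X)) (hl : l ≠ []) (x : X) :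
    ∃ u : X, polyEval a l x = ↑u := by
  obtain ⟨b, bs, rfl⟩ := List.exists_cons_of_ne_nil hl
  obtain ⟨w0, hw0⟩ := coe_mul_right a x
  obtain ⟨w1, hw1⟩ := coe_mul_left w0 b
  obtain ⟨v, hv⟩ := foldl_coe bs w1 x
  refine ⟨v, ?_⟩
  show List.foldl _ (a * ↑x * b) bs = _
  rw [hw0, hw1, hv]

end PolyAux

theorem statement14 (X : Type*) [Semigroup X] (hX : Polybounded X) : Polyfinite X := by
  obtain ⟨k, f, d, b, hpoly, hcover⟩ := hX
  refine ⟨(Finset.univ : Finset (Fin k × Fin k)).sup (fun p => d p.1 * d p.2),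
    Set.range b ∪ ⋃ (i : Fin k) (j : Fin k), {u : X | (u : WithOne X) = f i (b j)}, ?_, ?_⟩
  · refine (Set.finite_range b).union
      (Set.finite_iUnion fun i => Set.finite_iUnion fun j => Set.Subsingleton.finite ?_)
    intro u hu v hv
    have h : (u : WithOne X) = (v : WithOne X) := hu.trans hv.symm
    exact_mod_cast h
  · intro x y
    obtain ⟨j, hj⟩ := hcover y
    obtain ⟨hdj, a', l', hl', heq'⟩ := hpoly j
    have hne' : l' ≠ [] := by
      intro h; rw [h] at hl'; simp at hl'; omega
    have hldc : l'.dropLast ++ [l'.getLast hne'] = l' := List.dropLast_append_getLast hne'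
    set ld := l'.dropLast with hld
    set c := l'.getLast hne' with hc
    obtain ⟨u, hu⟩ := polyEval_exists_coe a' l' hne' x
    obtain ⟨i, hi⟩ := hcover u
    obtain ⟨hdi, a, l, hl, heq⟩ := hpoly i
    have hnel : l ≠ [] := by
      intro h; rw [h] at hl; simp at hl; omega
    have key : ∀ (t : X) (w : X), f j t = ↑w →
        polyEval (a * a') (compL a' ld c l) t = f i w := by
      intro t w hw
      rw [heq w]
      exact (polyEval_comp a a' c ld l hnel t w
        (by rw [hldc]; exact hw.symm.trans (heq' t))).symm
    refine ⟨fun t => polyEval (a * a') (compL a' ld c l) t, d i * d j,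
      Finset.le_sup (f := fun p => d p.1 * d p.2) (Finset.mem_univ (i, j)),
      ⟨by simpa using Nat.mul_le_mul hdi hdj, a * a', compL a' ld c l, ?_, fun t => rfl⟩,
      ?_, ?_⟩
    · rw [compL_length, hl]
      have h1 : ld.length + 1 = d j := by
        rw [← hl', ← hldc]; simp
      rw [h1]
    · refine ⟨b i, Or.inl ⟨i, rfl⟩, ?_⟩
      show polyEval (a * a') (compL a' ld c l) x = _
      rw [key x u ((heq' x).trans hu), hi]
    · obtain ⟨v, hv⟩ := polyEval_exists_coe a l hnel (b j)
      refine ⟨v, Or.inr (Set.mem_iUnion.mpr ⟨i, Set.mem_iUnion.mpr ⟨j, ?_⟩⟩), ?_⟩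
      · show (v : WithOne X) = f i (b j)
        rw [heq (b j)]; exact hv.symm
      · show polyEval (a * a') (compL a' ld c l) y = _
        rw [key y (b j) hj, heq (b j), hv]
end
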